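/- For α > 1, the second derivative of the margin-based α-loss, l^{α''}(z) = e^z(α e^z - α + 1)/(α (e^{-z}+1)^{-1/α}(e^z+1)^3), is strictly negative for z < log((α-1)/α) and strictly positive for z > log((α-1)/α); in particular the loss is not convex. -/

import Mathlib

noncomputable def sigmoid (z : ℝ) : ℝ := 1 / (1 + Real.exp (-z))

noncomputable def alphaLoss (α z : ℝ) : ℝ :=
  (α / (α - 1)) * (1 - sigmoid z ^ (1 - 1 / α))

noncomputable def alphaLossSecondDeriv (α z : ℝ) : ℝ :=
  Real.exp z * (α * Real.exp z - α + 1) /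
    (α * (Real.exp (-z) + 1) ^ (-(1 / α)) * (Real.exp z + 1) ^ 3)

/-!
The sign of `alphaLossSecondDeriv α z` is that of `α e^z - α + 1`, which changes sign exactly at
`e^z = (α - 1) / α`. The loss itself is bounded above by `α / (α - 1)` and strictly decreasing,
whereas a convex function bounded above on a whole vector space is constant: writing
`x = (1 - s) y + s w` with `w` far out on the line through `y` and `x` gives
`f x ≤ (1 - s) f y + s M`, and `s → 0` yields `f x ≤ f y`.
-/

open Set Filter Topology

theorem ConvexOn.le_of_bddAbove_range {E : Type*} [AddCommGroup E] [Module ℝ E] {f : E → ℝ}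
    (hf : ConvexOn ℝ univ f) (hbdd : BddAbove (range f)) (x y : E) : f x ≤ f y := by
  obtain ⟨M, hM⟩ := hbdd
  have hbound : ∀ s ∈ Ioc (0 : ℝ) 1, f x ≤ (1 - s) * f y + s * M := by
    rintro s ⟨hs0, hs1⟩
    have hx : (1 - s) • y + s • (y + s⁻¹ • (x - y)) = x := by
      rw [smul_add, smul_smul, mul_inv_cancel₀ hs0.ne', one_smul]
      module
    calc f x = f ((1 - s) • y + s • (y + s⁻¹ • (x - y))) := by rw [hx]
      _ ≤ (1 - s) * f y + s * f (y + s⁻¹ • (x - y)) :=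
        hf.2 (mem_univ _) (mem_univ _) (by linarith) hs0.le (by ring)
      _ ≤ (1 - s) * f y + s * M := by
        gcongr
        exact hM (mem_range_self _)
  have hlim : Tendsto (fun s : ℝ => (1 - s) * f y + s * M) (𝓝[>] 0) (𝓝 (f y)) := by
    have : Continuous (fun s : ℝ => (1 - s) * f y + s * M) := by fun_prop
    simpa using (this.tendsto 0).mono_left nhdsWithin_le_nhds
  exact ge_of_tendsto hlim (eventually_of_mem (Ioc_mem_nhdsGT one_pos) hbound)

theorem sigmoid_eq_real_sigmoid : sigmoid = Real.sigmoid := by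
  ext z
  rw [sigmoid, Real.sigmoid_def, one_div]

variable {α : ℝ}

theorem alphaLoss_le (hα : 1 < α) (z : ℝ) : alphaLoss α z ≤ α / (α - 1) := by
  have hc : 0 < α / (α - 1) := div_pos (by linarith) (by linarith)
  have hp : 0 < Real.sigmoid z ^ (1 - 1 / α) := Real.rpow_pos_of_pos (Real.sigmoid_pos z) _
  simp only [alphaLoss, sigmoid_eq_real_sigmoid]
  nlinarith

theorem alphaLoss_strictAnti (hα : 1 < α) : StrictAnti (alphaLoss α) := by
  intro a b hab
  have hc : 0 < α / (α - 1) := div_pos (by linarith) (by linarith)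
  have hp : 0 < 1 - 1 / α := sub_pos.2 ((div_lt_one (by linarith)).2 hα)
  simp only [alphaLoss, sigmoid_eq_real_sigmoid]
  gcongr
  exact (Real.sigmoid_pos a).le

theorem alphaLossSecondDeriv_denom_pos (hα : 0 < α) (z : ℝ) :
    0 < α * (Real.exp (-z) + 1) ^ (-(1 / α)) * (Real.exp z + 1) ^ 3 := by
  positivity

theorem alphaLossSecondDeriv_neg (hα : 1 < α) {z : ℝ} (hz : z < Real.log ((α - 1) / α)) :
    alphaLossSecondDeriv α z < 0 := by
  have hα0 : 0 < α := by linarith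
  rw [Real.lt_log_iff_exp_lt (div_pos (by linarith) hα0), lt_div_iff₀ hα0] at hz
  exact div_neg_of_neg_of_pos (mul_neg_of_pos_of_neg (Real.exp_pos z) (by linarith))
    (alphaLossSecondDeriv_denom_pos hα0 z)

theorem alphaLossSecondDeriv_pos (hα : 1 < α) {z : ℝ} (hz : Real.log ((α - 1) / α) < z) :
    0 < alphaLossSecondDeriv α z := by
  have hα0 : 0 < α := by linarith
  rw [Real.log_lt_iff_lt_exp (div_pos (by linarith) hα0), div_lt_iff₀ hα0] at hz
  exact div_pos (mul_pos (Real.exp_pos z) (by linarith)) (alphaLossSecondDeriv_denom_pos hα0 z)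

theorem alphaLoss_not_convex (α : ℝ) (hα : 1 < α) :
    (∀ z : ℝ, z < Real.log ((α - 1) / α) → alphaLossSecondDeriv α z < 0) ∧
    (∀ z : ℝ, z > Real.log ((α - 1) / α) → 0 < alphaLossSecondDeriv α z) ∧
    ¬ ConvexOn ℝ Set.univ (fun z => alphaLoss α z) := by
  refine ⟨fun z => alphaLossSecondDeriv_neg hα, fun z => alphaLossSecondDeriv_pos hα,
    fun hconv => ?_⟩
  have hbdd : BddAbove (range (alphaLoss α)) :=
    ⟨α / (α - 1), forall_mem_range.2 (alphaLoss_le hα)⟩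
  exact (alphaLoss_strictAnti hα zero_lt_one).not_ge (hconv.le_of_bddAbove_range hbdd 0 1)
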